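/- arXiv:1406.4753 — 2 statements merged into one kernel-verified Lean document; each statement's English description precedes it below -/
import Mathlib

section
/- Let (U, W, B) be a linear system over ℂ in which both U and W have countably infinite dimension. Then (U, W, B) is isomorphic to the standard countable linear system: there exist ℂ-linear equivalences f : U ≃ (ℕ →₀ ℂ) and g : W ≃ (ℕ →₀ ℂ) such that B(u, w) = ∑_i f(u)(i) · g(w)(i) for all u ∈ U, w ∈ W. -/
/-!
Mackey's back-and-forth argument. Enumerate spanning sequences `a` of `U` and `b` of `W`, and
grow a finite biorthogonal set of pairs `(e, f)` so that after step `n` both `a n` and `b n` lie in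
the spans of the first, resp. second, components; each enlargement is a Gram–Schmidt step made
possible by nondegeneracy. The union of these sets is biorthogonal and spanning, so its two
projections are dual bases of `U` and `W`, indexed by a set of cardinality `dim U = ℵ₀`.
Reindexed by `ℕ`, their coordinate maps carry `B` to the standard form.
-/

open Set Submodule

theorem exists_seq_of_forall_exists_step {α : Type*} {P : α → Prop} (R : ℕ → α → α → Prop)
    {a₀ : α} (h₀ : P a₀) (h : ∀ n a, P a → ∃ b, P b ∧ R n a b) :
    ∃ f : ℕ → α, ∀ n, P (f n) ∧ R n (f n) (f (n + 1)) := by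
  choose g hgP hgR using h
  let f : ℕ → {a // P a} := fun n => Nat.rec ⟨a₀, h₀⟩ (fun n a => ⟨g n a a.2, hgP n a a.2⟩) n
  exact ⟨fun n => (f n).1, fun n => ⟨(f n).2, hgR n _ _⟩⟩

section

variable {K U W : Type*} [Field K] [AddCommGroup U] [Module K U] [AddCommGroup W] [Module K W]

theorem linearIndependent_of_biorthogonal {ι : Type*} (B : U →ₗ[K] W →ₗ[K] K) {v : ι → U}
    {w : ι → W} (hdiag : ∀ i, B (v i) (w i) = 1) (hoff : Pairwise fun i j => B (v i) (w j) = 0) :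
    LinearIndependent K v := by
  classical
  have hcomp : (LinearMap.pi fun j => B.flip (w j)) ∘ v = fun i => Pi.single i 1 := by
    ext i j
    rcases eq_or_ne i j with rfl | hij
    · simp [hdiag]
    · simp [hoff hij, hij.symm]
  exact LinearIndependent.of_comp _ (hcomp ▸ Pi.linearIndependent_single_one ι K)

theorem Module.Basis.apply_eq_sum_repr_mul_repr {ι : Type*} {B : U →ₗ[K] W →ₗ[K] K}
    {e : Module.Basis ι K U} {f : Module.Basis ι K W} (hdiag : ∀ i, B (e i) (f i) = 1)
    (hoff : Pairwise fun i j => B (e i) (f j) = 0) (u : U) (w : W) :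
    B u w = (e.repr u).sum fun i a => a * f.repr w i := by
  have hleft : ∀ i, B (e i) w = f.repr w i := fun i =>
    LinearMap.congr_fun (f.ext (f₂ := (Finsupp.lapply i).comp f.repr.toLinearMap) fun j => by
      rcases eq_or_ne i j with rfl | hij
      · simp [hdiag]
      · simp [hoff hij, hij]) w
  nth_rw 1 [← e.linearCombination_repr u]
  simp [Finsupp.linearCombination_apply, Finsupp.sum, hleft]

theorem Module.Basis.nonempty_equiv_nat {ι : Type*} (e : Module.Basis ι K U)
    (h : Module.rank K U = Cardinal.aleph0) : Nonempty (ι ≃ ℕ) := by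
  have hι := e.mk_eq_rank
  rw [h, Cardinal.lift_aleph0, Cardinal.lift_eq_aleph0] at hι
  obtain ⟨_⟩ := Cardinal.denumerable_iff.2 hι
  exact ⟨Denumerable.eqv ι⟩

theorem exists_nat_span_eq_top (h : Module.rank K U = Cardinal.aleph0) :
    ∃ a : ℕ → U, span K (range a) = ⊤ := by
  let e := Module.Basis.ofVectorSpace K U
  obtain ⟨σ⟩ := e.nonempty_equiv_nat h
  exact ⟨e.reindex σ, (e.reindex σ).span_eq⟩

namespace LinearMap

def IsBiorthogonal (B : U →ₗ[K] W →ₗ[K] K) (S : Set (U × W)) : Prop :=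
  (∀ p ∈ S, B p.1 p.2 = 1) ∧ S.Pairwise fun p q => B p.1 q.2 = 0

namespace IsBiorthogonal

variable {B : U →ₗ[K] W →ₗ[K] K}

theorem swap {S : Set (U × W)} (hS : B.IsBiorthogonal S) :
    B.flip.IsBiorthogonal (Prod.swap '' S) :=
  ⟨forall_mem_image.2 fun p hp => hS.1 p hp,
    Pairwise.image fun _ hp _ hq hpq => hS.2 hq hp hpq.symm⟩

theorem insert {S : Set (U × W)} (hS : B.IsBiorthogonal S) {e : U} {f : W} (hef : B e f = 1)
    (he : ∀ q ∈ S, B e q.2 = 0) (hf : ∀ q ∈ S, B q.1 f = 0) :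
    B.IsBiorthogonal (insert (e, f) S) :=
  ⟨forall_mem_insert.2 ⟨hef, hS.1⟩,
    pairwise_insert.2 ⟨hS.2, fun q hq _ => ⟨he q hq, hf q hq⟩⟩⟩

theorem iUnion {ι : Type*} {S : ι → Set (U × W)} (hdir : Directed (· ⊆ ·) S)
    (hS : ∀ i, B.IsBiorthogonal (S i)) : B.IsBiorthogonal (⋃ i, S i) :=
  ⟨fun p hp => by obtain ⟨i, hi⟩ := mem_iUnion.1 hp; exact (hS i).1 p hi,
    (pairwise_iUnion hdir).2 fun i => (hS i).2⟩

theorem linearIndependent_fst {S : Set (U × W)} (hS : B.IsBiorthogonal S) :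
    LinearIndependent K fun p : S => p.1.1 :=
  linearIndependent_of_biorthogonal B (fun p => hS.1 p p.2)
    fun p q hpq => hS.2 p.2 q.2 (Subtype.coe_ne_coe.2 hpq)

theorem linearIndependent_snd {S : Set (U × W)} (hS : B.IsBiorthogonal S) :
    LinearIndependent K fun p : S => p.1.2 :=
  linearIndependent_of_biorthogonal B.flip (fun p => hS.1 p p.2)
    fun p q hpq => hS.2 q.2 p.2 (Subtype.coe_ne_coe.2 hpq.symm)

theorem apply_sub_sum_smul_snd {S : Finset (U × W)} (hS : B.IsBiorthogonal S) (x : U)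
    {q : U × W} (hq : q ∈ S) : B (x - ∑ p ∈ S, B x p.2 • p.1) q.2 = 0 := by
  have : ∑ p ∈ S, B x p.2 * B p.1 q.2 = B x q.2 := by
    rw [Finset.sum_eq_single q (fun p hp hpq => by rw [hS.2 hp hq hpq, mul_zero])
      (fun h => (h hq).elim), hS.1 q hq, mul_one]
  simp [this]

theorem apply_fst_sub_sum_smul {S : Finset (U × W)} (hS : B.IsBiorthogonal S) (y : W)
    {q : U × W} (hq : q ∈ S) : B q.1 (y - ∑ p ∈ S, B p.1 y • p.2) = 0 := by
  have : ∑ p ∈ S, B p.1 y * B q.1 p.2 = B q.1 y := by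
    rw [Finset.sum_eq_single q (fun p hp hpq => by rw [hS.2 hq hp hpq.symm, mul_zero])
      (fun h => (h hq).elim), hS.1 q hq, mul_one]
  simp [this]

/- Gram–Schmidt step: the residual `r` of `x` is orthogonal to the second components, and it is
paired with the residual of any `y` with `B r y ≠ 0`, which is orthogonal to the first ones. -/
theorem exists_finset_mem_span_fst (hB : ∀ u, (∀ w, B u w = 0) → u = 0) {S : Finset (U × W)}
    (hS : B.IsBiorthogonal S) (x : U) :
    ∃ S' : Finset (U × W), S ⊆ S' ∧ B.IsBiorthogonal S' ∧
      x ∈ span K (Prod.fst '' (S' : Set (U × W))) := by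
  classical
  set r := x - ∑ p ∈ S, B x p.2 • p.1 with hr_def
  have hsum : ∑ p ∈ S, B x p.2 • p.1 ∈ span K (Prod.fst '' (S : Set (U × W))) :=
    sum_mem fun p hp => smul_mem _ _ (subset_span (mem_image_of_mem _ hp))
  by_cases hr : r = 0
  · exact ⟨S, subset_rfl, hS, by rwa [sub_eq_zero.1 hr]⟩
  obtain ⟨y, hy⟩ : ∃ y, B r y ≠ 0 := by
    by_contra! h
    exact hr (hB r h)
  set s := y - ∑ p ∈ S, B p.1 y • p.2
  have hrS : ∀ q ∈ S, B r q.2 = 0 := fun q hq => hS.apply_sub_sum_smul_snd x hq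
  have hsS : ∀ q ∈ S, B q.1 s = 0 := fun q hq => hS.apply_fst_sub_sum_smul y hq
  have hrs : B r s = B r y := by
    have : ∑ p ∈ S, B p.1 y * B r p.2 = 0 :=
      Finset.sum_eq_zero fun p hp => by rw [hrS p hp, mul_zero]
    simp [s, this]
  refine ⟨Insert.insert (r, (B r y)⁻¹ • s) S, Finset.subset_insert _ _, ?_, ?_⟩
  · rw [Finset.coe_insert]
    refine hS.insert ?_ hrS fun q hq => by rw [map_smul, hsS q hq, smul_zero]
    rw [map_smul, hrs, smul_eq_mul, inv_mul_cancel₀ hy]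
  · rw [← sub_add_cancel x (∑ p ∈ S, B x p.2 • p.1), ← hr_def]
    refine add_mem (subset_span ⟨_, Finset.mem_insert_self _ _, rfl⟩) ?_
    exact span_mono (image_mono (by simp)) hsum

theorem exists_finset_mem_span_snd (hB : ∀ w, (∀ u, B u w = 0) → w = 0) {S : Finset (U × W)}
    (hS : B.IsBiorthogonal S) (y : W) :
    ∃ S' : Finset (U × W), S ⊆ S' ∧ B.IsBiorthogonal S' ∧
      y ∈ span K (Prod.snd '' (S' : Set (U × W))) := by
  classical
  have hS_swap : B.flip.IsBiorthogonal (S.image Prod.swap : Finset (W × U)) := by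
    rw [Finset.coe_image]; exact hS.swap
  obtain ⟨S', hSS', hS', hy⟩ := hS_swap.exists_finset_mem_span_fst hB y
  refine ⟨S'.image Prod.swap, fun p hp => ?_, ?_, ?_⟩
  · exact Finset.mem_image.2 ⟨p.swap, hSS' (Finset.mem_image_of_mem _ hp), p.swap_swap⟩
  · rw [Finset.coe_image, ← B.flip_flip]; exact hS'.swap
  · rwa [Finset.coe_image, image_image]

theorem exists_finset_mem_span (hB₁ : ∀ u, (∀ w, B u w = 0) → u = 0)
    (hB₂ : ∀ w, (∀ u, B u w = 0) → w = 0) {S : Finset (U × W)} (hS : B.IsBiorthogonal S)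
    (x : U) (y : W) :
    ∃ S' : Finset (U × W), B.IsBiorthogonal S' ∧ S ⊆ S' ∧
      x ∈ span K (Prod.fst '' (S' : Set (U × W))) ∧
      y ∈ span K (Prod.snd '' (S' : Set (U × W))) := by
  obtain ⟨S₁, hSS₁, hS₁, hx⟩ := hS.exists_finset_mem_span_fst hB₁ x
  obtain ⟨S₂, hS₁S₂, hS₂, hy⟩ := hS₁.exists_finset_mem_span_snd hB₂ y
  exact ⟨S₂, hS₂, hSS₁.trans hS₁S₂, span_mono (image_mono (Finset.coe_subset.2 hS₁S₂)) hx, hy⟩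

end IsBiorthogonal

theorem exists_isBiorthogonal_span_eq_top {B : U →ₗ[K] W →ₗ[K] K}
    (hB₁ : ∀ u, (∀ w, B u w = 0) → u = 0) (hB₂ : ∀ w, (∀ u, B u w = 0) → w = 0)
    {a : ℕ → U} {b : ℕ → W} (ha : span K (Set.range a) = ⊤) (hb : span K (Set.range b) = ⊤) :
    ∃ T : Set (U × W), B.IsBiorthogonal T ∧ span K (Prod.fst '' T) = ⊤ ∧
      span K (Prod.snd '' T) = ⊤ := by
  obtain ⟨S, hS⟩ := exists_seq_of_forall_exists_step
    (P := fun S : Finset (U × W) => B.IsBiorthogonal S)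
    (fun n S S' => S ⊆ S' ∧ a n ∈ span K (Prod.fst '' (S' : Set (U × W))) ∧
      b n ∈ span K (Prod.snd '' (S' : Set (U × W))))
    (a₀ := ∅) (by simp [IsBiorthogonal])
    fun n S hS => hS.exists_finset_mem_span hB₁ hB₂ (a n) (b n)
  have hmono : Monotone fun n => (S n : Set (U × W)) :=
    monotone_nat_of_le_succ fun n => Finset.coe_subset.2 (hS n).2.1
  have hsub : ∀ n, (S n : Set (U × W)) ⊆ ⋃ m, (S m : Set (U × W)) := subset_iUnion _
  refine ⟨⋃ n, S n, IsBiorthogonal.iUnion hmono.directed_le fun n => (hS n).1, ?_, ?_⟩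
  · rw [eq_top_iff, ← ha, span_le]
    rintro _ ⟨n, rfl⟩
    exact span_mono (image_mono (hsub (n + 1))) (hS n).2.2.1
  · rw [eq_top_iff, ← hb, span_le]
    rintro _ ⟨n, rfl⟩
    exact span_mono (image_mono (hsub (n + 1))) (hS n).2.2.2

theorem exists_linearEquiv_finsupp_nat (B : U →ₗ[K] W →ₗ[K] K)
    (hB₁ : ∀ u, (∀ w, B u w = 0) → u = 0) (hB₂ : ∀ w, (∀ u, B u w = 0) → w = 0)
    (hU : Module.rank K U = Cardinal.aleph0) (hW : Module.rank K W = Cardinal.aleph0) :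
    ∃ (f : U ≃ₗ[K] (ℕ →₀ K)) (g : W ≃ₗ[K] (ℕ →₀ K)),
      ∀ u w, B u w = (f u).sum fun i a => a * g w i := by
  obtain ⟨a, ha⟩ := exists_nat_span_eq_top hU
  obtain ⟨b, hb⟩ := exists_nat_span_eq_top hW
  obtain ⟨T, hT, hTU, hTW⟩ := exists_isBiorthogonal_span_eq_top hB₁ hB₂ ha hb
  let e := Module.Basis.mk hT.linearIndependent_fst (by rw [← image_eq_range, hTU])
  let f := Module.Basis.mk hT.linearIndependent_snd (by rw [← image_eq_range, hTW])
  obtain ⟨σ⟩ := e.nonempty_equiv_nat hU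
  refine ⟨(e.reindex σ).repr, (f.reindex σ).repr, Module.Basis.apply_eq_sum_repr_mul_repr ?_ ?_⟩
  · intro i
    simpa [e, f] using hT.1 _ (σ.symm i).2
  · intro i j hij
    simpa [e, f] using hT.2 (σ.symm i).2 (σ.symm j).2 (by simpa [Subtype.val_inj] using hij)

end LinearMap

end

/-- A linear system `(U, W, B)` over `ℂ` with `U` and `W` of countably infinite dimension
is isomorphic to the standard countable linear system `(ℕ →₀ ℂ, ℕ →₀ ℂ)` with the form
`(x, y) ↦ ∑ i, x i * y i`. -/
theorem stmt_5 {U W : Type*} [AddCommGroup U] [Module ℂ U] [AddCommGroup W] [Module ℂ W]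
    (B : U →ₗ[ℂ] W →ₗ[ℂ] ℂ)
    (hB1 : ∀ u : U, (∀ w : W, B u w = 0) → u = 0)
    (hB2 : ∀ w : W, (∀ u : U, B u w = 0) → w = 0)
    (hU : Module.rank ℂ U = Cardinal.aleph0)
    (hW : Module.rank ℂ W = Cardinal.aleph0) :
    ∃ (f : U ≃ₗ[ℂ] (ℕ →₀ ℂ)) (g : W ≃ₗ[ℂ] (ℕ →₀ ℂ)),
      ∀ (u : U) (w : W), B u w = (f u).sum fun i a => a * g w i :=
  B.exists_linearEquiv_finsupp_nat hB1 hB2 hU hW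
end

section
/- Let (U, W, B) be a linear system over ℂ with 2 ≤ Module.rank ℂ U. Then sl_{U,W} := ι(ker T) is a Lie ideal of the Mackey Lie algebra gl^M_{U,W} which is simple as a Lie algebra, and it is the unique simple ideal: every Lie ideal of gl^M_{U,W} which is simple as a Lie algebra equals sl_{U,W}. -/
/-!
Write `e(u, w) = ι(u ⊗ w)`. When `B u w = 0`, `e = e(u, w)` squares to zero and
`[e, [e, φ]] = -2 B(φ u, w) e`. Hence a subspace `C ⊆ End U` stable under `ad e` for all such `e`
and containing a non-scalar `φ` (by nondegeneracy some `B u w = 0` has `B(φ u, w) ≠ 0`) contains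
a nonzero square-zero `e(u, w)`; commutators with other square-zero rank-one operators move it to
all of them, and these span `sl_{U,W}`. A nonzero element of `sl_{U,W}` is not scalar (`1` has
infinite rank if `dim U = ∞` and trace `dim U ≠ 0` otherwise), which gives simplicity. A simple
ideal `I` of `gl^M_{U,W}` is non-abelian, so contains a non-scalar element, so `sl_{U,W} ⊆ I`;
then `sl_{U,W}` is a nonzero ideal of `I`, hence equal to it.
-/

open TensorProduct

variable {U W : Type*} [AddCommGroup U] [Module ℂ U] [AddCommGroup W] [Module ℂ W]

attribute [local instance 100] LieRing.ofAssociativeRing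

/-- The linear map `ι : U ⊗ W → End ℂ U` determined by `ι(u ⊗ w)(x) = B x w • u`. -/
noncomputable def iotaMap (B : U →ₗ[ℂ] W →ₗ[ℂ] ℂ) :
    U ⊗[ℂ] W →ₗ[ℂ] Module.End ℂ U :=
  (dualTensorHom ℂ U U).comp ((TensorProduct.map B.flip LinearMap.id).comp
    (TensorProduct.comm ℂ U W).toLinearMap)

/-- The defining property of `iotaMap`. -/
theorem iotaMap_apply (B : U →ₗ[ℂ] W →ₗ[ℂ] ℂ) (u x : U) (w : W) :
    iotaMap B (u ⊗ₜ w) x = B x w • u := by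
  simp [iotaMap]

/-- The linear map `T : U ⊗ W → ℂ` determined by `T(u ⊗ w) = B u w`. -/
noncomputable def Tmap (B : U →ₗ[ℂ] W →ₗ[ℂ] ℂ) : U ⊗[ℂ] W →ₗ[ℂ] ℂ :=
  TensorProduct.lift B

theorem Tmap_apply (B : U →ₗ[ℂ] W →ₗ[ℂ] ℂ) (u : U) (w : W) :
    Tmap B (u ⊗ₜ w) = B u w := rfl

/-- The Mackey Lie algebra `gl^M_{U,W}`: all `φ ∈ End ℂ U` whose dual map preserves
`W̃ = range (B.flip) ⊆ U*`. -/
noncomputable def glMackey (B : U →ₗ[ℂ] W →ₗ[ℂ] ℂ) :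
    LieSubalgebra ℂ (Module.End ℂ U) where
  carrier := {φ | ∀ ξ ∈ LinearMap.range B.flip, φ.dualMap ξ ∈ LinearMap.range B.flip}
  add_mem' := by
    intro a b ha hb ξ hξ
    have h : (a + b).dualMap ξ = a.dualMap ξ + b.dualMap ξ := by ext x; simp
    rw [h]
    exact Submodule.add_mem _ (ha ξ hξ) (hb ξ hξ)
  zero_mem' := by
    intro ξ hξ
    have h : (0 : Module.End ℂ U).dualMap ξ = 0 := by ext x; simp
    rw [h]; exact Submodule.zero_mem _
  smul_mem' := by
    intro c a ha ξ hξ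
    have h : (c • a).dualMap ξ = c • a.dualMap ξ := by ext x; simp
    rw [h]
    exact Submodule.smul_mem _ _ (ha ξ hξ)
  lie_mem' := by
    intro a b ha hb ξ hξ
    have h : (⁅a, b⁆ : Module.End ℂ U).dualMap ξ
        = b.dualMap (a.dualMap ξ) - a.dualMap (b.dualMap ξ) := by
      ext x; simp [Module.End.lie_apply]
    rw [h]
    exact Submodule.sub_mem _ (hb _ (ha ξ hξ)) (ha _ (hb ξ hξ))

theorem glM_bracket_mem (B : U →ₗ[ℂ] W →ₗ[ℂ] ℂ) (φ : Module.End ℂ U)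
    (hφ : ∀ ξ ∈ LinearMap.range B.flip, φ.dualMap ξ ∈ LinearMap.range B.flip)
    (t : U ⊗[ℂ] W) :
    ⁅φ, iotaMap B t⁆ ∈ Submodule.map (iotaMap B) (LinearMap.ker (Tmap B)) := by
  induction t using TensorProduct.induction_on with
  | zero => simp
  | tmul u' w' =>
    obtain ⟨w'', hw''⟩ := hφ (B.flip w') ⟨w', rfl⟩
    have key : ∀ x : U, B x w'' = B (φ x) w' := by
      intro x
      have := congrArg (fun ξ : Module.Dual ℂ U => ξ x) hw''
      simpa using this
    refine ⟨φ u' ⊗ₜ w' - u' ⊗ₜ w'', ?_, ?_⟩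
    · simp only [SetLike.mem_coe, LinearMap.mem_ker, map_sub, Tmap_apply]
      rw [key u']
      ring
    · ext x
      rw [Ring.lie_def]
      simp only [map_sub, LinearMap.sub_apply, Module.End.mul_apply, iotaMap_apply,
        map_smul, smul_eq_mul]
      rw [key x]
  | add a b ha hb =>
    rw [map_add, lie_add]
    exact Submodule.add_mem _ ha hb

/-- `sl_{U,W} = ι(ker T)` regarded as a Lie ideal of the Mackey Lie algebra
`gl^M_{U,W}`. -/
noncomputable def slIdeal (B : U →ₗ[ℂ] W →ₗ[ℂ] ℂ) : LieIdeal ℂ ↥(glMackey B) where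
  carrier := {φ | (φ : Module.End ℂ U) ∈ Submodule.map (iotaMap B) (LinearMap.ker (Tmap B))}
  add_mem' := by
    intro a b ha hb
    simp only [Set.mem_setOf_eq] at *
    exact Submodule.add_mem _ ha hb
  zero_mem' := by
    simp only [Set.mem_setOf_eq]
    exact Submodule.zero_mem _
  smul_mem' := by
    intro c a ha
    simp only [Set.mem_setOf_eq] at *
    exact Submodule.smul_mem _ _ ha
  lie_mem := by
    intro x m hm
    simp only [Set.mem_setOf_eq] at *
    obtain ⟨t, -, ht⟩ := hm
    have hco : ((⁅x, m⁆ : ↥(glMackey B)) : Module.End ℂ U)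
        = ⁅(x : Module.End ℂ U), (m : Module.End ℂ U)⁆ := rfl
    rw [hco, ← ht]
    exact glM_bracket_mem B (x : Module.End ℂ U) x.2 t

section Separation

variable {K M N : Type*} [Field K] [AddCommGroup M] [Module K M] [AddCommGroup N] [Module K N]
  {B : M →ₗ[K] N →ₗ[K] K}

theorem exists_apply_eq_zero_apply_eq_one (hB : ∀ m : M, (∀ n : N, B m n = 0) → m = 0)
    {u v : M} (huv : LinearIndependent K ![u, v]) : ∃ n : N, B u n = 0 ∧ B v n = 1 := by
  obtain ⟨n, hun, hvn⟩ : ∃ n : N, B u n = 0 ∧ B v n ≠ 0 := by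
    by_contra! hker
    have hspan : B v ∈ Submodule.span K (Set.range fun _ : Unit => B u) :=
      mem_span_of_iInf_ker_le_ker fun n hn => by simpa using hker n (by simpa using hn)
    rw [Set.range_const, Submodule.mem_span_singleton] at hspan
    obtain ⟨c, hc⟩ := hspan
    have hvu : c • u - v = 0 := hB _ fun n => by simp [← hc]
    rw [LinearIndependent.pair_iff] at huv
    simpa using (huv c (-1) (by simpa [sub_eq_add_neg] using hvu)).2
  exact ⟨(B v n)⁻¹ • n, by simp [hun], by simp [hvn]⟩

theorem exists_eq_smul_one_of_apply_eq_zero (hB : ∀ m : M, (∀ n : N, B m n = 0) → m = 0)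
    {φ : Module.End K M} (hφ : ∀ (u : M) (n : N), B u n = 0 → B (φ u) n = 0) :
    ∃ c : K, φ = c • 1 :=
  LinearMap.exists_eq_smul_id_of_forall_notLinearIndependent fun u hu => by
    obtain ⟨n, hun, hφn⟩ := exists_apply_eq_zero_apply_eq_one hB hu
    simp [hφ u n hun] at hφn

end Separation

section RankOne

variable (B : U →ₗ[ℂ] W →ₗ[ℂ] ℂ)

noncomputable def slSubmodule : Submodule ℂ (Module.End ℂ U) :=
  (LinearMap.ker (Tmap B)).map (iotaMap B)

noncomputable def rankOne : U →ₗ[ℂ] W →ₗ[ℂ] Module.End ℂ U :=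
  (TensorProduct.mk ℂ U W).compr₂ (iotaMap B)

theorem rankOne_apply (u x : U) (w : W) : rankOne B u w x = B x w • u :=
  iotaMap_apply B u x w

theorem lie_rankOne_rankOne (a u : U) (b w : W) :
    ⁅rankOne B a b, rankOne B u w⁆ = B u b • rankOne B a w - B a w • rankOne B u b := by
  ext x
  simp only [Ring.lie_def, LinearMap.sub_apply, Module.End.mul_apply, rankOne_apply, map_smul,
    LinearMap.smul_apply, smul_smul]
  module

theorem lie_rankOne_lie_rankOne {u : U} {w : W} (h : B u w = 0) (φ : Module.End ℂ U) :
    ⁅rankOne B u w, ⁅rankOne B u w, φ⁆⁆ = (-2 * B (φ u) w) • rankOne B u w := by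
  ext x
  simp only [Ring.lie_def, LinearMap.sub_apply, Module.End.mul_apply, rankOne_apply, map_smul,
    map_sub, LinearMap.smul_apply, h, zero_sub, sub_zero, zero_smul, smul_zero, smul_smul,
    map_zero]
  module

theorem rankOne_mem_glMackey (u : U) (w : W) : rankOne B u w ∈ glMackey B := by
  rintro _ ⟨w', rfl⟩
  exact ⟨B u w' • w, by ext x; simp [rankOne_apply, mul_comm]⟩

theorem rankOne_mem_slSubmodule {u : U} {w : W} (h : B u w = 0) :
    rankOne B u w ∈ slSubmodule B :=
  ⟨u ⊗ₜ w, h, rfl⟩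

end RankOne

section Spanning

variable (B : U →ₗ[ℂ] W →ₗ[ℂ] ℂ)

theorem rankOne_sub_smul_mem {C : Submodule ℂ (Module.End ℂ U)}
    (hC : ∀ (u : U) (w : W), B u w = 0 → rankOne B u w ∈ C) {u₀ : U} {w₀ : W}
    (h₀ : B u₀ w₀ = 1) (u : U) (w : W) :
    rankOne B u w - B u w • rankOne B u₀ w₀ ∈ C := by
  -- Split `u = u' + a • u₀`, `w = w' + b • w₀` with `B u' w₀ = B u₀ w' = 0`; then `B u' w' = β`,
  -- so `rankOne B (u' + β • u₀) (w' - w₀)` is square-zero.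
  set a := B u w₀
  set b := B u₀ w
  set β := B u w - a * b
  have hu' : B (u - a • u₀) w₀ = 0 := by simp [a, h₀]
  have hw' : B u₀ (w - b • w₀) = 0 := by simp [b, h₀]
  have hβ : B (u - a • u₀ + β • u₀) (w - b • w₀ - w₀) = 0 := by
    simp only [map_add, map_sub, map_smul, LinearMap.add_apply, LinearMap.sub_apply,
      LinearMap.smul_apply, smul_eq_mul, h₀, β, a, b]
    ring
  have key : rankOne B u w - B u w • rankOne B u₀ w₀ =
      rankOne B (u - a • u₀ + β • u₀) (w - b • w₀ - w₀) + (1 + b) • rankOne B (u - a • u₀) w₀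
        + (a - β) • rankOne B u₀ (w - b • w₀) := by
    simp only [map_add, map_sub, map_smul, LinearMap.add_apply, LinearMap.sub_apply,
      LinearMap.smul_apply, β]
    module
  rw [key]
  exact add_mem (add_mem (hC _ _ hβ) (C.smul_mem _ (hC _ _ hu'))) (C.smul_mem _ (hC _ _ hw'))

theorem slSubmodule_le_of_rankOne_mem {C : Submodule ℂ (Module.End ℂ U)}
    (hC : ∀ (u : U) (w : W), B u w = 0 → rankOne B u w ∈ C) {u₀ : U} {w₀ : W}
    (h₀ : B u₀ w₀ = 1) : slSubmodule B ≤ C := by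
  have hrange : ∀ t, iotaMap B t - Tmap B t • rankOne B u₀ w₀ ∈ C := by
    intro t
    induction t using TensorProduct.induction_on with
    | zero => simp
    | tmul u w => exact rankOne_sub_smul_mem B hC h₀ u w
    | add s t hs ht => simpa [add_smul, add_sub_add_comm] using add_mem hs ht
  rintro _ ⟨t, ht, rfl⟩
  simpa [LinearMap.mem_ker.mp ht] using hrange t

theorem trace_iotaMap [Module.Finite ℂ U] (t : U ⊗[ℂ] W) :
    LinearMap.trace ℂ U (iotaMap B t) = Tmap B t := by
  induction t using TensorProduct.induction_on with
  | zero => simp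
  | tmul u w =>
    have h : iotaMap B (u ⊗ₜ w) = dualTensorHom ℂ U U (B.flip w ⊗ₜ u) := by
      simp [iotaMap]
    rw [h, LinearMap.trace_eq_contract_apply, contractLeft_apply, Tmap_apply]
    rfl
  | add s t hs ht => rw [map_add, map_add, map_add, hs, ht]

theorem finiteDimensional_range_iotaMap (t : U ⊗[ℂ] W) :
    FiniteDimensional ℂ (LinearMap.range (iotaMap B t)) := by
  induction t using TensorProduct.induction_on with
  | zero => rw [map_zero, LinearMap.range_zero]; infer_instance
  | tmul u w =>
    refine Submodule.finiteDimensional_of_le (S₂ := ℂ ∙ u) ?_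
    rintro _ ⟨x, rfl⟩
    exact Submodule.mem_span_singleton.mpr ⟨B x w, (iotaMap_apply B u x w).symm⟩
  | add s t hs ht =>
    rw [map_add]
    exact Submodule.finiteDimensional_of_le (LinearMap.range_add_le _ _)

theorem one_notMem_slSubmodule [Nontrivial U] : (1 : Module.End ℂ U) ∉ slSubmodule B := by
  rintro ⟨t, ht, h1⟩
  have : FiniteDimensional ℂ U := by
    have := finiteDimensional_range_iotaMap B t
    rw [h1, LinearMap.range_eq_top.mpr fun x => ⟨x, rfl⟩] at this
    exact Module.Finite.equiv Submodule.topEquiv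
  have htr := trace_iotaMap B t
  rw [h1, LinearMap.mem_ker.mp ht, LinearMap.trace_one, Nat.cast_eq_zero] at htr
  exact Module.finrank_pos.ne' htr

end Spanning

section Generation

variable (B : U →ₗ[ℂ] W →ₗ[ℂ] ℂ)

def IsRankOneAdStable (C : Submodule ℂ (Module.End ℂ U)) : Prop :=
  ∀ (a : U) (b : W), B a b = 0 → ∀ f ∈ C, ⁅rankOne B a b, f⁆ ∈ C

variable {B} {C : Submodule ℂ (Module.End ℂ U)}

theorem IsRankOneAdStable.rankOne_mem (hC : IsRankOneAdStable B C) {φ : Module.End ℂ U}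
    (hφ : φ ∈ C) {u : U} {w : W} (h : B u w = 0) (hφuw : B (φ u) w ≠ 0) :
    rankOne B u w ∈ C := by
  have h2 := hC u w h _ (hC u w h φ hφ)
  rw [lie_rankOne_lie_rankOne B h] at h2
  rwa [C.smul_mem_iff (by simpa using hφuw)] at h2

theorem IsRankOneAdStable.rankOne_mem_left (hB₁ : ∀ u : U, (∀ w : W, B u w = 0) → u = 0)
    (hC : IsRankOneAdStable B C) {u₀ : U} {w₀ : W} (hu₀ : u₀ ≠ 0) (h₀ : rankOne B u₀ w₀ ∈ C)
    {u : U} (hu : B u w₀ = 0) : rankOne B u w₀ ∈ C := by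
  by_cases hdep : ∃ c : ℂ, c • u₀ = u
  · obtain ⟨c, rfl⟩ := hdep
    simpa using C.smul_mem c h₀
  have hind : LinearIndependent ℂ ![u, u₀] :=
    LinearIndependent.pair_symm_iff.mp ((LinearIndependent.pair_iff' hu₀).mpr (by simpa using hdep))
  obtain ⟨b, hub, hu₀b⟩ := exists_apply_eq_zero_apply_eq_one hB₁ hind
  simpa [lie_rankOne_rankOne, hu, hu₀b] using hC u b hub _ h₀

theorem IsRankOneAdStable.rankOne_mem_right (hB₂ : ∀ w : W, (∀ u : U, B u w = 0) → w = 0)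
    (hC : IsRankOneAdStable B C) {u₀ : U} {w₀ : W} (hw₀ : w₀ ≠ 0) (h₀ : rankOne B u₀ w₀ ∈ C)
    {w : W} (hw : B u₀ w = 0) : rankOne B u₀ w ∈ C := by
  by_cases hdep : ∃ c : ℂ, c • w₀ = w
  · obtain ⟨c, rfl⟩ := hdep
    simpa using C.smul_mem c h₀
  have hind : LinearIndependent ℂ ![w, w₀] :=
    LinearIndependent.pair_symm_iff.mp ((LinearIndependent.pair_iff' hw₀).mpr (by simpa using hdep))
  obtain ⟨a, haw, haw₀⟩ := exists_apply_eq_zero_apply_eq_one (B := B.flip) hB₂ hind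
  simpa [lie_rankOne_rankOne, hw, show B a w₀ = 1 from haw₀] using
    C.neg_mem (hC a w haw _ h₀)

theorem IsRankOneAdStable.rankOne_mem_of_rankOne_mem
    (hB₁ : ∀ u : U, (∀ w : W, B u w = 0) → u = 0) (hB₂ : ∀ w : W, (∀ u : U, B u w = 0) → w = 0)
    (hC : IsRankOneAdStable B C) {u₀ : U} {w₀ : W} (hu₀ : u₀ ≠ 0) (hw₀ : w₀ ≠ 0)
    (h₀ : rankOne B u₀ w₀ ∈ C) {u : U} {w : W} (h : B u w = 0) : rankOne B u w ∈ C := by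
  by_cases huw₀ : B u w₀ = 0
  · exact hC.rankOne_mem_right hB₂ hw₀ (hC.rankOne_mem_left hB₁ hu₀ h₀ huw₀) h
  by_cases hu₀w : B u₀ w = 0
  · exact hC.rankOne_mem_left hB₁ hu₀ (hC.rankOne_mem_right hB₂ hw₀ h₀ hu₀w) h
  -- `[e, [e, rankOne B u₀ w₀]]` is a nonzero multiple of `e = rankOne B u w`.
  exact hC.rankOne_mem h₀ h (by simpa [rankOne_apply] using mul_ne_zero huw₀ hu₀w)

theorem IsRankOneAdStable.slSubmodule_le
    (hB₁ : ∀ u : U, (∀ w : W, B u w = 0) → u = 0) (hB₂ : ∀ w : W, (∀ u : U, B u w = 0) → w = 0)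
    (hC : IsRankOneAdStable B C) {φ : Module.End ℂ U} (hφ : φ ∈ C) (hφ₁ : ∀ c : ℂ, φ ≠ c • 1) :
    slSubmodule B ≤ C := by
  obtain ⟨u, w, h, hφuw⟩ : ∃ (u : U) (w : W), B u w = 0 ∧ B (φ u) w ≠ 0 := by
    by_contra! hφ'
    obtain ⟨c, hc⟩ := exists_eq_smul_one_of_apply_eq_zero hB₁ hφ'
    exact hφ₁ c hc
  have hu : u ≠ 0 := by rintro rfl; simp at hφuw
  have hw : w ≠ 0 := by rintro rfl; simp at hφuw
  obtain ⟨w₀, hw₀⟩ : ∃ w₀ : W, B u w₀ ≠ 0 := by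
    by_contra! h'
    exact hu (hB₁ u h')
  refine slSubmodule_le_of_rankOne_mem B (u₀ := u) (w₀ := (B u w₀)⁻¹ • w₀)
    (fun a b hab => hC.rankOne_mem_of_rankOne_mem hB₁ hB₂ hu hw (hC.rankOne_mem hφ h hφuw) hab) ?_
  simp [hw₀]

end Generation

section Simplicity

variable {B : U →ₗ[ℂ] W →ₗ[ℂ] ℂ}

noncomputable def rankOneSl {u : U} {w : W} (h : B u w = 0) : slIdeal B :=
  ⟨⟨rankOne B u w, rankOne_mem_glMackey B u w⟩, rankOne_mem_slSubmodule B h⟩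

theorem isRankOneAdStable_map {L : Type*} [LieRing L] [LieAlgebra ℂ L]
    (f : L →ₗ⁅ℂ⁆ Module.End ℂ U) (hf : ∀ (a : U) (b : W), B a b = 0 → ∃ x, f x = rankOne B a b)
    (J : LieIdeal ℂ L) : IsRankOneAdStable B (J.toSubmodule.map (f : L →ₗ[ℂ] Module.End ℂ U)) := by
  rintro a b hab _ ⟨y, hy, rfl⟩
  obtain ⟨x, hx⟩ := hf a b hab
  exact ⟨⁅x, y⁆, J.lie_mem hy, by rw [LieHom.coe_toLinearMap, f.map_lie, hx]⟩

theorem exists_lie_rankOne_rankOne_ne_zero (hB₁ : ∀ u : U, (∀ w : W, B u w = 0) → u = 0)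
    (hrank : 2 ≤ Module.rank ℂ U) :
    ∃ (u u' : U) (w w' : W), B u w = 0 ∧ B u' w' = 0 ∧ ⁅rankOne B u w, rankOne B u' w'⁆ ≠ 0 := by
  obtain ⟨v, hv⟩ := Module.le_rank_iff.mp (by exact_mod_cast hrank : ((2 : ℕ) : Cardinal) ≤ _)
  have hv' : LinearIndependent ℂ ![v 0, v 1] := by
    convert hv using 1; ext i; fin_cases i <;> rfl
  obtain ⟨w, hw₀, hw₁⟩ := exists_apply_eq_zero_apply_eq_one hB₁ hv'
  obtain ⟨w', hw'₁, hw'₀⟩ :=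
    exists_apply_eq_zero_apply_eq_one hB₁ (LinearIndependent.pair_symm_iff.mp hv')
  refine ⟨v 0, v 1, w, w', hw₀, hw'₁, fun h => hv.ne_zero 0 ?_⟩
  simpa [lie_rankOne_rankOne, rankOne_apply, hw₀, hw₁, hw'₀] using LinearMap.congr_fun h (v 0)


theorem isSimple_slIdeal (hB₁ : ∀ u : U, (∀ w : W, B u w = 0) → u = 0)
    (hB₂ : ∀ w : W, (∀ u : U, B u w = 0) → w = 0) (hrank : 2 ≤ Module.rank ℂ U) :
    LieAlgebra.IsSimple ℂ (slIdeal B) where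
  eq_bot_or_eq_top J := by
    refine or_iff_not_imp_left.mpr fun hJ => ?_
    have : Nontrivial U := rank_pos_iff_nontrivial.mp (lt_of_lt_of_le (by norm_num) hrank)
    obtain ⟨x, hxJ, hx⟩ : ∃ x ∈ J, x ≠ 0 := by
      by_contra! h
      exact hJ ((LieSubmodule.eq_bot_iff J).mpr h)
    let f := (glMackey B).incl.comp (slIdeal B).incl
    have hf : Function.Injective f := Subtype.val_injective.comp Subtype.val_injective
    have hC := isRankOneAdStable_map f (fun _ _ hab => ⟨rankOneSl hab, rfl⟩) J
    have hfx : ∀ c : ℂ, f x ≠ c • 1 := by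
      intro c hc
      have hc₁ : c • (1 : Module.End ℂ U) ∈ slSubmodule B := hc ▸ x.2
      rcases eq_or_ne c 0 with rfl | hc₀
      · exact hx (hf (by simpa using hc))
      · exact one_notMem_slSubmodule B (((slSubmodule B).smul_mem_iff hc₀).mp hc₁)
    have hle := hC.slSubmodule_le hB₁ hB₂ ⟨x, hxJ, rfl⟩ hfx
    rw [eq_top_iff]
    rintro y -
    obtain ⟨j, hj, hjy⟩ := hle y.2
    rwa [hf hjy] at hj
  non_abelian h := by
    obtain ⟨u, u', w, w', huw, hu'w', hne⟩ := exists_lie_rankOne_rankOne_ne_zero hB₁ hrank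
    exact hne (congrArg (fun x : slIdeal B => ((x : glMackey B) : Module.End ℂ U))
      (trivial_lie_zero _ _ (rankOneSl huw) (rankOneSl hu'w')))

theorem eq_slIdeal_of_isSimple (hB₁ : ∀ u : U, (∀ w : W, B u w = 0) → u = 0)
    (hB₂ : ∀ w : W, (∀ u : U, B u w = 0) → w = 0) (hrank : 2 ≤ Module.rank ℂ U)
    (I : LieIdeal ℂ (glMackey B)) (hI : LieAlgebra.IsSimple ℂ I) : I = slIdeal B := by
  obtain ⟨x, y, hxy⟩ : ∃ x y : I, ⁅x, y⁆ ≠ 0 := by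
    by_contra! h
    exact hI.non_abelian ⟨fun x y => h x y⟩
  have hx : ∀ c : ℂ, ((x : glMackey B) : Module.End ℂ U) ≠ c • 1 := by
    intro c hc
    apply hxy
    ext1; ext1
    change ⁅((x : glMackey B) : Module.End ℂ U), ((y : glMackey B) : Module.End ℂ U)⁆ = 0
    rw [hc, smul_lie, Ring.lie_def, one_mul, mul_one, sub_self, smul_zero]
  have hC := isRankOneAdStable_map (glMackey B).incl
    (fun a b _ => ⟨⟨rankOne B a b, rankOne_mem_glMackey B a b⟩, rfl⟩) I
  have hle := hC.slSubmodule_le hB₁ hB₂ ⟨x, x.2, rfl⟩ hx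
  have hslI : slIdeal B ≤ I := fun y hy => by
    obtain ⟨j, hj, hjy⟩ := hle hy
    rwa [Subtype.val_injective hjy] at hj
  have hsl : slIdeal B ≠ ⊥ := (LieSubmodule.nontrivial_iff_ne_bot ℂ _ _).mp
    ((isSimple_slIdeal hB₁ hB₂ hrank).nontrivial ℂ)
  rcases hI.eq_bot_or_eq_top ((slIdeal B).comap I.incl) with hbot | htop
  · exact absurd ((LieIdeal.comap_incl_eq_bot.mp hbot).eq_bot_of_ge hslI) hsl
  · exact le_antisymm (LieIdeal.comap_incl_eq_top.mp htop) hslI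

/-- For a linear system `(U, W, B)` with `2 ≤ dim U`: `sl_{U,W} = ι(ker T)` is a Lie
ideal of `gl^M_{U,W}`, it is simple as a Lie algebra, and it is the unique simple Lie
ideal of `gl^M_{U,W}`: every Lie ideal of `gl^M_{U,W}` which is simple as a Lie algebra
equals `sl_{U,W}`. -/
theorem stmt_10 (B : U →ₗ[ℂ] W →ₗ[ℂ] ℂ)
    (hB1 : ∀ u : U, (∀ w : W, B u w = 0) → u = 0)
    (hB2 : ∀ w : W, (∀ u : U, B u w = 0) → w = 0)
    (hrank : 2 ≤ Module.rank ℂ U) :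
    LieAlgebra.IsSimple ℂ ↑(slIdeal B) ∧
    (∀ I : LieIdeal ℂ ↑(glMackey B), LieAlgebra.IsSimple ℂ ↑I → I = slIdeal B) :=
  ⟨isSimple_slIdeal hB1 hB2 hrank, eq_slIdeal_of_isSimple hB1 hB2 hrank⟩
end Simplicity
end
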